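/- Let H1 be an r1 × n1 matrix over 𝔽₂ and H2 an r2 × n2 matrix over 𝔽₂, with hypergraph product check matrices H_X = [H1 ⊗ I_{n2} | I_{r1} ⊗ H2ᵀ] and H_Z = [I_{n1} ⊗ H2 | H1ᵀ ⊗ I_{r2}]. Writing k1 = n1 − rank(H1), k2 = n2 − rank(H2), k1ᵀ = r1 − rank(H1), k2ᵀ = r2 − rank(H2), the number of logical qubits of the hypergraph product code satisfies (n1·n2 + r1·r2) − rank(H_X) − rank(H_Z) = k1·k2 + k1ᵀ·k2ᵀ. -/

import Mathlib

/-! The columns of `[A ⊗ I | I ⊗ B]` span `im A ⊗ 𝔽^m + 𝔽^r ⊗ im B`, and by right exactness of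
the tensor product the quotient of `𝔽^r ⊗ 𝔽^m` by this subspace is `coker A ⊗ coker B`. Hence
`rank H_X = r1·n2 − k1ᵀ·k2`; `H_Z` is the same construction for `H1ᵀ` and `H2` with its two blocks
swapped, so `rank H_Z = n1·r2 − k1·k2ᵀ`, and the count of logical qubits is arithmetic. -/

open Matrix
open scoped Kronecker

/-- The X-type check matrix of the hypergraph product code:
`H_X = [H1 ⊗ I_{n2} | I_{r1} ⊗ H2ᵀ]`. -/
def hgpX {r1 n1 r2 n2 : ℕ}
    (H1 : Matrix (Fin r1) (Fin n1) (ZMod 2)) (H2 : Matrix (Fin r2) (Fin n2) (ZMod 2)) :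
    Matrix (Fin r1 × Fin n2) ((Fin n1 × Fin n2) ⊕ (Fin r1 × Fin r2)) (ZMod 2) :=
  Matrix.fromCols (H1 ⊗ₖ (1 : Matrix (Fin n2) (Fin n2) (ZMod 2)))
    ((1 : Matrix (Fin r1) (Fin r1) (ZMod 2)) ⊗ₖ H2ᵀ)

/-- The Z-type check matrix of the hypergraph product code:
`H_Z = [I_{n1} ⊗ H2 | H1ᵀ ⊗ I_{r2}]`. -/
def hgpZ {r1 n1 r2 n2 : ℕ}
    (H1 : Matrix (Fin r1) (Fin n1) (ZMod 2)) (H2 : Matrix (Fin r2) (Fin n2) (ZMod 2)) :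
    Matrix (Fin n1 × Fin r2) ((Fin n1 × Fin n2) ⊕ (Fin r1 × Fin r2)) (ZMod 2) :=
  Matrix.fromCols ((1 : Matrix (Fin n1) (Fin n1) (ZMod 2)) ⊗ₖ H2)
    (H1ᵀ ⊗ₖ (1 : Matrix (Fin r2) (Fin r2) (ZMod 2)))

open Module LinearMap TensorProduct

theorem finrank_range_rTensor_sup_range_lTensor_add {K V W V' W' : Type*} [Field K]
    [AddCommGroup V] [Module K V] [AddCommGroup W] [Module K W] [AddCommGroup V'] [Module K V']
    [AddCommGroup W'] [Module K W'] [FiniteDimensional K V] [FiniteDimensional K W]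
    (f : V' →ₗ[K] V) (g : W' →ₗ[K] W) :
    finrank K ↥(range (f.rTensor W) ⊔ range (g.lTensor V)) +
        finrank K (V ⧸ range f) * finrank K (W ⧸ range g) = finrank K V * finrank K W := by
  have hS : range (f.rTensor W) ⊔ range (g.lTensor V) =
      range (map (range f).subtype id) ⊔ range (map id (range g).subtype) := by
    simp only [rTensor, lTensor, range_map, Submodule.range_subtype]
  rw [← finrank_tensorProduct, (quotientTensorQuotientEquiv (range f) (range g)).finrank_eq, ← hS,
    add_comm, Submodule.finrank_quotient_add_finrank, finrank_tensorProduct]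

namespace Matrix

variable {K : Type*} [Field K]

theorem toLin_fromCols {ι₁ ι₂ κ M₁ M₂ N : Type*} [Fintype ι₁] [Fintype ι₂] [Fintype κ]
    [DecidableEq ι₁] [DecidableEq ι₂] [AddCommGroup M₁] [Module K M₁] [AddCommGroup M₂]
    [Module K M₂] [AddCommGroup N] [Module K N] (b₁ : Basis ι₁ K M₁) (b₂ : Basis ι₂ K M₂)
    (c : Basis κ K N) (X : Matrix κ ι₁ K) (Y : Matrix κ ι₂ K) :
    toLin (b₁.prod b₂) c (fromCols X Y) = (toLin b₁ c X).coprod (toLin b₂ c Y) := by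
  refine (b₁.prod b₂).ext fun i => ?_
  rcases i with i | i <;>
    simp only [toLin_self, coprod_apply, Basis.prod_apply_inl_fst, Basis.prod_apply_inl_snd,
      Basis.prod_apply_inr_fst, Basis.prod_apply_inr_snd, map_zero, add_zero, zero_add,
      fromCols_apply_inl, fromCols_apply_inr]

theorem finrank_quotient_range_toLin_basisFun {m n : Type*} [Fintype m] [Fintype n]
    [DecidableEq n] (A : Matrix m n K) :
    finrank K ((m → K) ⧸ range (toLin (Pi.basisFun K n) (Pi.basisFun K m) A)) =
      Fintype.card m - A.rank := by
  rw [Submodule.finrank_quotient, finrank_fintype_fun_eq_card, ← rank_eq_finrank_range_toLin]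

theorem rank_fromCols_kronecker_one_one_kronecker_add {r n m s : Type*} [Fintype r] [Fintype n]
    [Fintype m] [Fintype s] [DecidableEq r] [DecidableEq n] [DecidableEq m] [DecidableEq s]
    (A : Matrix r n K) (B : Matrix m s K) :
    (fromCols (A ⊗ₖ (1 : Matrix m m K)) ((1 : Matrix r r K) ⊗ₖ B)).rank +
        (Fintype.card r - A.rank) * (Fintype.card m - B.rank) =
      Fintype.card r * Fintype.card m := by
  rw [rank_eq_finrank_range_toLin _ ((Pi.basisFun K r).tensorProduct (Pi.basisFun K m))
      (((Pi.basisFun K n).tensorProduct (Pi.basisFun K m)).prod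
        ((Pi.basisFun K r).tensorProduct (Pi.basisFun K s))),
    toLin_fromCols, range_coprod, toLin_kronecker, toLin_kronecker, toLin_one, toLin_one,
    ← finrank_quotient_range_toLin_basisFun, ← finrank_quotient_range_toLin_basisFun,
    ← finrank_fintype_fun_eq_card K, ← finrank_fintype_fun_eq_card K]
  exact finrank_range_rTensor_sup_range_lTensor_add _ _

theorem rank_fromCols_comm {m n₁ n₂ : Type*} [Fintype n₁] [Fintype n₂] (X : Matrix m n₁ K)
    (Y : Matrix m n₂ K) : (fromCols X Y).rank = (fromCols Y X).rank := by
  rw [← rank_submatrix (fromCols X Y) (Equiv.refl m) (Equiv.sumComm n₂ n₁)]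
  congr 1
  ext i (j | j) <;> rfl

end Matrix

/-- The number of logical qubits of the hypergraph product code:
`(n1·n2 + r1·r2) − rank(H_X) − rank(H_Z) = k1·k2 + k1ᵀ·k2ᵀ`, where
`k1 = n1 − rank(H1)`, `k2 = n2 − rank(H2)`, `k1ᵀ = r1 − rank(H1)`, `k2ᵀ = r2 − rank(H2)`. -/
theorem hgp_logical_qubits {r1 n1 r2 n2 : ℕ}
    (H1 : Matrix (Fin r1) (Fin n1) (ZMod 2)) (H2 : Matrix (Fin r2) (Fin n2) (ZMod 2)) :
    (n1 * n2 + r1 * r2) - (hgpX H1 H2).rank - (hgpZ H1 H2).rank =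
      (n1 - H1.rank) * (n2 - H2.rank) + (r1 - H1.rank) * (r2 - H2.rank) := by
  have hX : (hgpX H1 H2).rank + (r1 - H1.rank) * (n2 - H2.rank) = r1 * n2 := by
    rw [hgpX]
    simpa [rank_transpose] using rank_fromCols_kronecker_one_one_kronecker_add H1 H2ᵀ
  have hZ : (hgpZ H1 H2).rank + (n1 - H1.rank) * (r2 - H2.rank) = n1 * r2 := by
    rw [hgpZ, rank_fromCols_comm]
    simpa [rank_transpose] using rank_fromCols_kronecker_one_one_kronecker_add H1ᵀ H2
  have hsplit : n1 * n2 + r1 * r2 = (hgpX H1 H2).rank + (hgpZ H1 H2).rank +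
      ((n1 - H1.rank) * (n2 - H2.rank) + (r1 - H1.rank) * (r2 - H2.rank)) := by
    zify [H1.rank_le_height, H1.rank_le_width, H2.rank_le_height, H2.rank_le_width] at hX hZ ⊢
    linear_combination -hX - hZ
  omega
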